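/- arXiv:1204.5528 — 3 statements merged into one kernel-verified Lean document; each statement's English description precedes it below -/
import Mathlib

section
/- Let f : ℂⁿ → ℂ be a real-differentiable function which is strongly polar weighted homogeneous: there are positive integers p₁,…,pₙ and integers m_r, m_p such that f(r^{p₁}z₁,…,r^{pₙ}zₙ) = r^{m_r} f(z) for all r > 0 and all z, and f(e^{ip₁η}z₁,…,e^{ipₙη}zₙ) = e^{i m_p η} f(z) for all η ∈ ℝ and all z (the radial and polar weights coincide). Then for every z ∈ ℂⁿ: Σ_{j=1}^n p_j z_j f_{z_j}(z) = ((m_r + m_p)/2)·f(z) and Σ_{j=1}^n p_j conj(z_j) f_{z̄_j}(z) = ((m_r − m_p)/2)·f(z). -/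
/-! Differentiating the radial identity at `r = 1` gives `Df_z(p·z) = m_r f(z)`, and
differentiating the polar identity at `η = 0` gives `Df_z(i p·z) = i m_p f(z)`. Since
`Df_z(v) = Σ v_j f_{z_j} + conj v_j f_{z̄_j}`, these say `S + T = m_r f(z)` and
`i S − i T = i m_p f(z)` for the two Euler sums `S`, `T`, which is a linear system for them. -/

open Complex ComplexConjugate

/-- The Wirtinger derivative `∂f/∂z_j` of a real-differentiable map `f : ℂⁿ → ℂ`. -/
noncomputable def wdz {n : ℕ} (f : (Fin n → ℂ) → ℂ) (z : Fin n → ℂ) (j : Fin n) : ℂ :=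
  (1 / 2 : ℂ) * (fderiv ℝ f z (Pi.single j 1) - Complex.I * fderiv ℝ f z (Pi.single j Complex.I))

/-- The Wirtinger derivative `∂f/∂z̄_j` of a real-differentiable map `f : ℂⁿ → ℂ`. -/
noncomputable def wdzbar {n : ℕ} (f : (Fin n → ℂ) → ℂ) (z : Fin n → ℂ) (j : Fin n) : ℂ :=
  (1 / 2 : ℂ) * (fderiv ℝ f z (Pi.single j 1) + Complex.I * fderiv ℝ f z (Pi.single j Complex.I))

lemma HasFDerivAt.apply_eq_of_comp_eventuallyEq {E F : Type*} [NormedAddCommGroup E]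
    [NormedSpace ℝ E] [NormedAddCommGroup F] [NormedSpace ℝ F] {f : E → F} {f' : E →L[ℝ] F}
    {γ : ℝ → E} {γ' : E} {g : ℝ → F} {g' : F} {t : ℝ}
    (hf : HasFDerivAt f f' (γ t)) (hγ : HasDerivAt γ γ' t) (hg : HasDerivAt g g' t)
    (hfg : f ∘ γ =ᶠ[nhds t] g) : f' γ' = g' :=
  ((hf.comp_hasDerivAt t hγ).congr_of_eventuallyEq hfg.symm).unique hg

lemma hasDerivAt_ofReal_zpow_mul_at_one (m : ℤ) (c : ℂ) :
    HasDerivAt (fun r : ℝ => ((r ^ m : ℝ) : ℂ) * c) (m * c) 1 := by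
  simpa using ((hasDerivAt_zpow m 1 (Or.inl one_ne_zero)).ofReal_comp).mul_const c

lemma hasDerivAt_ofReal_pow_mul_at_one (m : ℕ) (c : ℂ) :
    HasDerivAt (fun r : ℝ => ((r ^ m : ℝ) : ℂ) * c) (m * c) 1 := by
  simpa using hasDerivAt_ofReal_zpow_mul_at_one m c

lemma hasDerivAt_cexp_I_mul_mul_at_zero (a c : ℂ) :
    HasDerivAt (fun η : ℝ => exp (I * a * η) * c) (I * a * c) 0 := by
  have hlin : HasDerivAt (fun η : ℝ => I * a * η) (I * a) 0 := by
    simpa using (hasDerivAt_id (0 : ℝ)).ofReal_comp.const_mul (I * a)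
  simpa using hlin.cexp.mul_const c

lemma fderiv_apply_single_eq_wirtinger {n : ℕ} (f : (Fin n → ℂ) → ℂ) (z : Fin n → ℂ)
    (j : Fin n) (c : ℂ) :
    fderiv ℝ f z (Pi.single j c) = c * wdz f z j + conj c * wdzbar f z j := by
  have hc : Pi.single j c =
      c.re • (Pi.single j 1 : Fin n → ℂ) + c.im • (Pi.single j I : Fin n → ℂ) := by
    rw [← Pi.single_smul, ← Pi.single_smul, ← Pi.single_add]
    simp [Complex.real_smul, Complex.re_add_im]
  rw [hc, map_add, map_smul, map_smul, wdz, wdzbar, Complex.real_smul, Complex.real_smul]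
  conv_rhs => rw [← Complex.re_add_im c, map_add, map_mul, Complex.conj_ofReal,
    Complex.conj_ofReal, Complex.conj_I]
  ring_nf
  rw [Complex.I_sq]
  ring

lemma fderiv_apply_mul_weighted_eq_wirtinger {n : ℕ} (f : (Fin n → ℂ) → ℂ) (z : Fin n → ℂ)
    (a : ℂ) (w : Fin n → ℝ) :
    fderiv ℝ f z (fun j => a * w j * z j) =
      a * ∑ j, (w j : ℂ) * (z j * wdz f z j) +
        conj a * ∑ j, (w j : ℂ) * (conj (z j) * wdzbar f z j) := by
  conv_lhs => rw [← Finset.univ_sum_single (fun j => a * w j * z j), map_sum]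
  simp only [fderiv_apply_single_eq_wirtinger, Finset.mul_sum, ← Finset.sum_add_distrib,
    map_mul, Complex.conj_ofReal]
  refine Finset.sum_congr rfl fun j _ => ?_
  ring

lemma fderiv_apply_radial_weighted_eq {n : ℕ} {f : (Fin n → ℂ) → ℂ} {z : Fin n → ℂ}
    (hf : DifferentiableAt ℝ f z) (p : Fin n → ℕ) (m : ℤ)
    (hrad : ∀ r : ℝ, 0 < r → f (fun j => ((r ^ (p j) : ℝ) : ℂ) * z j) = ((r ^ m : ℝ) : ℂ) * f z) :
    fderiv ℝ f z (fun j => (p j : ℂ) * z j) = m * f z := by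
  have hcurve : HasDerivAt (fun r : ℝ => fun j => ((r ^ (p j) : ℝ) : ℂ) * z j)
      (fun j => (p j : ℂ) * z j) 1 :=
    hasDerivAt_pi.mpr fun j => hasDerivAt_ofReal_pow_mul_at_one (p j) (z j)
  refine HasFDerivAt.apply_eq_of_comp_eventuallyEq (f := f) ?_ hcurve
    (hasDerivAt_ofReal_zpow_mul_at_one m (f z)) ?_
  · simpa using hf.hasFDerivAt
  · filter_upwards [eventually_gt_nhds one_pos] with r hr using hrad r hr

lemma fderiv_apply_polar_weighted_eq {n : ℕ} {f : (Fin n → ℂ) → ℂ} {z : Fin n → ℂ}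
    (hf : DifferentiableAt ℝ f z) (w : Fin n → ℂ) (m : ℂ)
    (hpol : ∀ η : ℝ, f (fun j => exp (I * w j * η) * z j) = exp (I * m * η) * f z) :
    fderiv ℝ f z (fun j => I * w j * z j) = I * m * f z := by
  have hcurve : HasDerivAt (fun η : ℝ => fun j => exp (I * w j * η) * z j)
      (fun j => I * w j * z j) 0 :=
    hasDerivAt_pi.mpr fun j => hasDerivAt_cexp_I_mul_mul_at_zero (w j) (z j)
  refine HasFDerivAt.apply_eq_of_comp_eventuallyEq (f := f) ?_ hcurve
    (hasDerivAt_cexp_I_mul_mul_at_zero m (f z)) (Filter.Eventually.of_forall hpol)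
  simpa using hf.hasFDerivAt

theorem strongly_polar_weighted_euler_equalities_general (n : ℕ) (f : (Fin n → ℂ) → ℂ)
    (hf : Differentiable ℝ f)
    (p : Fin n → ℕ)
    (mr mp : ℤ)
    (hrad : ∀ r : ℝ, 0 < r → ∀ z : Fin n → ℂ,
      f (fun j => ((r ^ (p j) : ℝ) : ℂ) * z j) = ((r ^ mr : ℝ) : ℂ) * f z)
    (hpol : ∀ (η : ℝ) (z : Fin n → ℂ),
      f (fun j => Complex.exp (Complex.I * (p j : ℂ) * (η : ℂ)) * z j)
        = Complex.exp (Complex.I * (mp : ℂ) * (η : ℂ)) * f z)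
    (z : Fin n → ℂ) :
    (∑ j, (p j : ℂ) * (z j * wdz f z j) = (((mr : ℂ) + (mp : ℂ)) / 2) * f z) ∧
    (∑ j, (p j : ℂ) * (conj (z j) * wdzbar f z j) = (((mr : ℂ) - (mp : ℂ)) / 2) * f z) := by
  set S := ∑ j, (p j : ℂ) * (z j * wdz f z j)
  set T := ∑ j, (p j : ℂ) * (conj (z j) * wdzbar f z j)
  have hsum : S + T = mr * f z := by
    have h := fderiv_apply_mul_weighted_eq_wirtinger f z 1 (fun j => p j)
    simp only [fderiv_apply_radial_weighted_eq (hf z) p mr fun r hr => hrad r hr z,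
      Complex.ofReal_natCast, one_mul, map_one] at h
    exact h.symm
  have hIdiff : I * S - I * T = I * (mp * f z) := by
    have h := fderiv_apply_mul_weighted_eq_wirtinger f z I (fun j => p j)
    simp only [fderiv_apply_polar_weighted_eq (hf z) (fun j => p j) mp fun η => hpol η z,
      Complex.ofReal_natCast, Complex.conj_I] at h
    linear_combination -h
  have hdiff : S - T = mp * f z := mul_left_cancel₀ I_ne_zero (by rw [mul_sub, hIdiff])
  constructor
  · linear_combination (hsum + hdiff) / 2
  · linear_combination (hsum - hdiff) / 2

/-- Euler equalities for a strongly polar weighted homogeneous mixed function: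
the radial and polar weights coincide, and `f` is separately weighted homogeneous
in `z` and `z̄`. -/
theorem strongly_polar_weighted_euler_equalities (n : ℕ) (f : (Fin n → ℂ) → ℂ)
    (hf : Differentiable ℝ f)
    (p : Fin n → ℕ) (hp : ∀ j, 0 < p j)
    (mr mp : ℤ)
    (hrad : ∀ r : ℝ, 0 < r → ∀ z : Fin n → ℂ,
      f (fun j => ((r ^ (p j) : ℝ) : ℂ) * z j) = ((r ^ mr : ℝ) : ℂ) * f z)
    (hpol : ∀ (η : ℝ) (z : Fin n → ℂ),
      f (fun j => Complex.exp (Complex.I * (p j : ℂ) * (η : ℂ)) * z j)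
        = Complex.exp (Complex.I * (mp : ℂ) * (η : ℂ)) * f z)
    (z : Fin n → ℂ) :
    (∑ j, (p j : ℂ) * (z j * wdz f z j) = (((mr : ℂ) + (mp : ℂ)) / 2) * f z) ∧
    (∑ j, (p j : ℂ) * (conj (z j) * wdzbar f z j) = (((mr : ℂ) - (mp : ℂ)) / 2) * f z) :=
  strongly_polar_weighted_euler_equalities_general n f hf p mr mp hrad hpol z
end

section
/- Let f = h + i·g : ℂⁿ → ℂ be a real-analytic polar weighted homogeneous mixed function (h, g real-valued): there are positive integers q₁,…,qₙ, p₁,…,pₙ and nonzero integers m_r, m_p with f(r^{q₁}z₁,…,r^{qₙ}zₙ) = r^{m_r} f(z) for all r > 0 and f(e^{ip₁η}z₁,…,e^{ipₙη}zₙ) = e^{i m_p η} f(z) for all η ∈ ℝ. Assume V = f⁻¹(0) has an isolated mixed singularity at the origin, i.e. for every z ∈ V \ {0} the real Fréchet derivative of f : ℝ²ⁿ → ℝ² at z is surjective. Then for every positive integer vector a = (a₁,…,aₙ) and every z ∈ V \ {0}, the three vectors ∇ρ_a(z) = 2(a₁z₁,…,aₙzₙ), ∇h(z) and ∇g(z)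 are ℝ-linearly independent in ℂⁿ ≅ ℝ²ⁿ; consequently every weighted sphere S_r(a) = {z : Σ_j a_j|z_j|² = r²}, r > 0, intersects V transversely. -/
/-!
If `c₀ ∇ρ_a + c₁ ∇h + c₂ ∇g = 0`, pair this relation with a vector `v` under the real inner
product `Re ⟨·, v⟩` of `ℂⁿ ≅ ℝ²ⁿ`, which turns a hermitian gradient `∇φ` into `dφ(v)`.
Differentiating the radial action `r ↦ f(r^q z)` at `r = 1` (Euler's identity) shows that
`df_z` kills the weighted radial vector `(q_j z_j)_j` when `f z = 0`, while that vector pairs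
positively with `∇ρ_a(z)`; hence `c₀ = 0`. Surjectivity of `df_z` then yields vectors with
`df_z(v) = 1` and `df_z(v) = i`, which force `c₁ = c₂ = 0`.
-/

open Complex ComplexConjugate

theorem differentiableAt_of_surjective_fderiv {𝕜 E F : Type*} [NontriviallyNormedField 𝕜]
    [NormedAddCommGroup E] [NormedSpace 𝕜 E] [NormedAddCommGroup F] [NormedSpace 𝕜 F]
    [Nontrivial F] {f : E → F} {x : E} (hf : Function.Surjective (fderiv 𝕜 f x)) :
    DifferentiableAt 𝕜 f x := by
  by_contra h
  obtain ⟨y, hy⟩ := exists_ne (0 : F)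
  obtain ⟨v, hv⟩ := hf y
  rw [fderiv_zero_of_not_differentiableAt h] at hv
  exact hy hv.symm

theorem fderiv_re_comp_apply {E : Type*} [NormedAddCommGroup E] [NormedSpace ℝ E] {F : E → ℂ}
    {z : E} (hF : DifferentiableAt ℝ F z) (v : E) :
    fderiv ℝ (fun w => (F w).re) z v = (fderiv ℝ F z v).re := by
  have h : HasFDerivAt (fun w => (F w).re) (reCLM.comp (fderiv ℝ F z)) z :=
    reCLM.hasFDerivAt.comp z hF.hasFDerivAt
  rw [h.fderiv]
  rfl

theorem fderiv_im_comp_apply {E : Type*} [NormedAddCommGroup E] [NormedSpace ℝ E] {F : E → ℂ}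
    {z : E} (hF : DifferentiableAt ℝ F z) (v : E) :
    fderiv ℝ (fun w => (F w).im) z v = (fderiv ℝ F z v).im := by
  have h : HasFDerivAt (fun w => (F w).im) (imCLM.comp (fderiv ℝ F z)) z :=
    imCLM.hasFDerivAt.comp z hF.hasFDerivAt
  rw [h.fderiv]
  rfl

theorem fderiv_weighted_euler {n : ℕ} {F : (Fin n → ℂ) → ℂ} {z : Fin n → ℂ} {q : Fin n → ℕ}
    {m : ℤ} (hF : ∀ r : ℝ, 0 < r →
      F (fun j => ((r ^ q j : ℝ) : ℂ) * z j) = ((r ^ m : ℝ) : ℂ) * F z)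
    (hFz : DifferentiableAt ℝ F z) :
    fderiv ℝ F z (fun j => (q j : ℂ) * z j) = m * F z := by
  have hcurve : HasDerivAt (fun r : ℝ => fun j => ((r ^ q j : ℝ) : ℂ) * z j)
      (fun j => (q j : ℂ) * z j) 1 := by
    refine hasDerivAt_pi.2 fun j => ?_
    simpa using ((hasDerivAt_pow (q j) (1 : ℝ)).ofReal_comp).mul_const (z j)
  have hlhs := hFz.hasFDerivAt.comp_hasDerivAt_of_eq (1 : ℝ) hcurve (by simp)
  have hrhs : HasDerivAt (fun r : ℝ => ((r ^ m : ℝ) : ℂ) * F z) (m * F z) 1 := by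
    simpa using ((hasDerivAt_zpow m (1 : ℝ) (Or.inl one_ne_zero)).ofReal_comp).mul_const (F z)
  refine hlhs.unique (hrhs.congr_of_eventuallyEq ?_)
  filter_upwards [eventually_gt_nhds one_pos] with r hr using hF r hr

theorem linearIndependent_fin_three_of_dual {K M : Type*} [Field K] [AddCommGroup M]
    [Module K M] {u : Fin 3 → M} (ℓ₀ ℓ₁ ℓ₂ : M →ₗ[K] K)
    (h₀ : ℓ₀ (u 0) ≠ 0) (h₀₁ : ℓ₀ (u 1) = 0) (h₀₂ : ℓ₀ (u 2) = 0)
    (h₁₁ : ℓ₁ (u 1) = 1) (h₁₂ : ℓ₁ (u 2) = 0) (h₂₁ : ℓ₂ (u 1) = 0) (h₂₂ : ℓ₂ (u 2) = 1) :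
    LinearIndependent K u := by
  rw [Fintype.linearIndependent_iff]
  intro c hc
  have hℓ : ∀ ℓ : M →ₗ[K] K, c 0 * ℓ (u 0) + c 1 * ℓ (u 1) + c 2 * ℓ (u 2) = 0 := fun ℓ => by
    simpa [Fin.sum_univ_three] using congrArg ℓ hc
  have hc₀ : c 0 = 0 := by simpa [h₀₁, h₀₂, h₀] using hℓ ℓ₀
  have hc₁ : c 1 = 0 := by simpa [hc₀, h₁₁, h₁₂] using hℓ ℓ₁
  have hc₂ : c 2 = 0 := by simpa [hc₀, h₂₁, h₂₂] using hℓ ℓ₂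
  intro i
  fin_cases i <;> assumption

theorem pi_single_eq_re_smul_add_im_smul {ι : Type*} [DecidableEq ι] (j : ι) (w : ℂ) :
    Pi.single j w = w.re • (Pi.single j 1 : ι → ℂ) + w.im • (Pi.single j I : ι → ℂ) := by
  rw [← Pi.single_smul, ← Pi.single_smul, ← Pi.single_add]
  simp [Complex.real_smul, Complex.re_add_im]

section RealInner

variable {ι : Type*} [Fintype ι]

noncomputable def realInner (v : ι → ℂ) : (ι → ℂ) →ₗ[ℝ] ℝ where
  toFun u := (∑ j, conj (u j) * v j).re
  map_add' u u' := by simp [add_mul, Finset.sum_add_distrib]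
  map_smul' c u := by simp [Complex.real_smul, mul_assoc, ← Finset.mul_sum]

theorem realInner_apply (v u : ι → ℂ) :
    realInner v u = ∑ j, ((u j).re * (v j).re + (u j).im * (v j).im) := by
  simp [realInner, Complex.re_sum, Complex.mul_re]

theorem realInner_weighted_pos {z : ι → ℂ} (hz : z ≠ 0) {a q : ι → ℕ}
    (ha : ∀ j, 0 < a j) (hq : ∀ j, 0 < q j) :
    0 < realInner (fun j => (q j : ℂ) * z j) (fun j => 2 * ((a j : ℂ) * z j)) := by
  have hterm : ∀ j, (2 * ((a j : ℂ) * z j)).re * ((q j : ℂ) * z j).re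
      + (2 * ((a j : ℂ) * z j)).im * ((q j : ℂ) * z j).im = 2 * a j * q j * normSq (z j) := by
    intro j
    simp only [mul_re, mul_im, re_ofNat, im_ofNat, natCast_re, natCast_im, normSq_apply]
    ring
  obtain ⟨j₀, hj₀⟩ := Function.ne_iff.1 hz
  rw [realInner_apply]
  simp_rw [hterm]
  refine Finset.sum_pos' (fun j _ => mul_nonneg (by positivity) (normSq_nonneg _))
    ⟨j₀, Finset.mem_univ _, mul_pos ?_ (normSq_pos.2 hj₀)⟩
  have := ha j₀
  have := hq j₀
  positivity

end RealInner

section Wirtinger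

variable {n : ℕ} {z : Fin n → ℂ}

noncomputable def hermitianGradient (φ : (Fin n → ℂ) → ℝ) (z : Fin n → ℂ) : Fin n → ℂ :=
  fun j => 2 * conj (wdz (fun w => (φ w : ℂ)) z j)

theorem hermitianGradient_apply {φ : (Fin n → ℂ) → ℝ}
    (hφ : DifferentiableAt ℝ φ z) (j : Fin n) :
    hermitianGradient φ z j = fderiv ℝ φ z (Pi.single j 1) + fderiv ℝ φ z (Pi.single j I) * I := by
  have h : HasFDerivAt (fun w => (φ w : ℂ)) (ofRealCLM.comp (fderiv ℝ φ z)) z :=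
    ofRealCLM.hasFDerivAt.comp z hφ.hasFDerivAt
  simp only [hermitianGradient, wdz, h.fderiv, ContinuousLinearMap.comp_apply, ofRealCLM_apply,
    map_mul, map_sub, map_div₀, map_one, map_ofNat, conj_ofReal, conj_I]
  ring

theorem realInner_hermitianGradient {φ : (Fin n → ℂ) → ℝ}
    (hφ : DifferentiableAt ℝ φ z) (v : Fin n → ℂ) :
    realInner v (hermitianGradient φ z) = fderiv ℝ φ z v := by
  set L := fderiv ℝ φ z
  have hL : L v = ∑ j, ((v j).re * L (Pi.single j 1) + (v j).im * L (Pi.single j I)) := by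
    conv_lhs => rw [← Finset.univ_sum_single v, map_sum]
    refine Finset.sum_congr rfl fun j _ => ?_
    rw [pi_single_eq_re_smul_add_im_smul, map_add, map_smul, map_smul, smul_eq_mul, smul_eq_mul]
  rw [hL, realInner_apply]
  refine Finset.sum_congr rfl fun j _ => ?_
  simp only [hermitianGradient_apply hφ, add_re, add_im, mul_re, mul_im, ofReal_re, ofReal_im,
    I_re, I_im, L]
  ring

theorem realInner_hermitianGradient_re {F : (Fin n → ℂ) → ℂ} (hF : DifferentiableAt ℝ F z)
    (v : Fin n → ℂ) :
    realInner v (hermitianGradient (fun w => (F w).re) z) = (fderiv ℝ F z v).re := by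
  rw [realInner_hermitianGradient (φ := fun w => (F w).re) (reCLM.differentiableAt.comp z hF),
    fderiv_re_comp_apply hF]

theorem realInner_hermitianGradient_im {F : (Fin n → ℂ) → ℂ} (hF : DifferentiableAt ℝ F z)
    (v : Fin n → ℂ) :
    realInner v (hermitianGradient (fun w => (F w).im) z) = (fderiv ℝ F z v).im := by
  rw [realInner_hermitianGradient (φ := fun w => (F w).im) (imCLM.differentiableAt.comp z hF),
    fderiv_im_comp_apply hF]

end Wirtinger

theorem weighted_sphere_transverse_to_polar_weighted_hypersurface_general (n : ℕ)
    (f : (Fin n → ℂ) → ℂ)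
    (q : Fin n → ℕ) (hq : ∀ j, 0 < q j)
    (mr : ℤ)
    (hrad : ∀ r : ℝ, 0 < r → ∀ z : Fin n → ℂ,
      f (fun j => ((r ^ (q j) : ℝ) : ℂ) * z j) = ((r ^ mr : ℝ) : ℂ) * f z)
    (hiso : ∀ z : Fin n → ℂ, f z = 0 → z ≠ 0 → Function.Surjective (fderiv ℝ f z))
    (a : Fin n → ℕ) (ha : ∀ j, 0 < a j)
    (z : Fin n → ℂ) (hz : f z = 0) (hz0 : z ≠ 0) :
    LinearIndependent ℝ
      (![(fun j => 2 * ((a j : ℂ) * z j)),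
        (fun j => 2 * conj (wdz (fun w => (((f w).re : ℂ))) z j)),
        (fun j => 2 * conj (wdz (fun w => (((f w).im : ℂ))) z j))] :
        Fin 3 → (Fin n → ℂ)) := by
  have hf : DifferentiableAt ℝ f z := differentiableAt_of_surjective_fderiv (hiso z hz hz0)
  obtain ⟨v₁, hv₁⟩ := hiso z hz hz0 1
  obtain ⟨v₂, hv₂⟩ := hiso z hz hz0 I
  have hradial : fderiv ℝ f z (fun j => (q j : ℂ) * z j) = 0 := by
    rw [fderiv_weighted_euler (fun r hr => hrad r hr z) hf, hz, mul_zero]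
  change LinearIndependent ℝ ![fun j => 2 * ((a j : ℂ) * z j),
    hermitianGradient (fun w => (f w).re) z, hermitianGradient (fun w => (f w).im) z]
  refine linearIndependent_fin_three_of_dual (realInner fun j => (q j : ℂ) * z j)
    (realInner v₁) (realInner v₂) (realInner_weighted_pos hz0 ha hq).ne' ?_ ?_ ?_ ?_ ?_ ?_ <;>
    simp [realInner_hermitianGradient_re hf, realInner_hermitianGradient_im hf, hradial, hv₁, hv₂]

/-- Transversality of weighted spheres with a polar weighted homogeneous mixed
hypersurface having an isolated mixed singularity at the origin: at any point
`z ≠ 0` of `V = f⁻¹(0)`, the hermitian gradients `∇ρ_a(z) = 2(a₁z₁,…,aₙzₙ)`,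
`∇h(z)` and `∇g(z)` (for `f = h + i g`) are `ℝ`-linearly independent, hence every
weighted sphere `S_r(a)` intersects `V` transversely. -/
theorem weighted_sphere_transverse_to_polar_weighted_hypersurface (n : ℕ)
    (f : (Fin n → ℂ) → ℂ)
    (hf : ∀ z, AnalyticAt ℝ f z)
    (q p : Fin n → ℕ) (hq : ∀ j, 0 < q j) (hp : ∀ j, 0 < p j)
    (mr mp : ℤ) (hmr : mr ≠ 0) (hmp : mp ≠ 0)
    (hrad : ∀ r : ℝ, 0 < r → ∀ z : Fin n → ℂ,
      f (fun j => ((r ^ (q j) : ℝ) : ℂ) * z j) = ((r ^ mr : ℝ) : ℂ) * f z)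
    (hpol : ∀ (η : ℝ) (z : Fin n → ℂ),
      f (fun j => Complex.exp (Complex.I * (p j : ℂ) * (η : ℂ)) * z j)
        = Complex.exp (Complex.I * (mp : ℂ) * (η : ℂ)) * f z)
    (hiso : ∀ z : Fin n → ℂ, f z = 0 → z ≠ 0 → Function.Surjective (fderiv ℝ f z))
    (a : Fin n → ℕ) (ha : ∀ j, 0 < a j)
    (z : Fin n → ℂ) (hz : f z = 0) (hz0 : z ≠ 0) :
    LinearIndependent ℝ
      (![(fun j => 2 * ((a j : ℂ) * z j)),
        (fun j => 2 * conj (wdz (fun w => (((f w).re : ℂ))) z j)),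
        (fun j => 2 * conj (wdz (fun w => (((f w).im : ℂ))) z j))] :
        Fin 3 → (Fin n → ℂ)) :=
  weighted_sphere_transverse_to_polar_weighted_hypersurface_general n f q hq mr hrad hiso a ha z hz
    hz0
end

section
/- Let f : ℂⁿ → ℂ be a holomorphic weighted homogeneous polynomial: there are positive integers p₁,…,pₙ and a positive integer d with f(r^{p₁}z₁,…,r^{pₙ}zₙ) = r^d f(z) for all r > 0 and all z. Assume the origin is the only critical point of f, i.e. for z ≠ 0 not all partial derivatives ∂f/∂z_j(z) vanish. Then for every z ≠ 0 with f(z) = 0 there exist indices j < k with conj(z_j)·(∂f/∂z_k)(z) ≠ conj(z_k)·(∂f/∂z_j)(z); equivalently Σ_{1≤j<k≤n} |conj(z_j)(∂f/∂z_k)(z) − conj(z_k)(∂f/∂z_j)(z)|² > 0, so the link f⁻¹(0) ∩ S_r is a positive contact submanifold of the sphere S_r for every r > 0. -/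
/-!
Differentiating the homogeneity relation along the curve `r ↦ (r^{p_j} z_j)_j` at `r = 1` gives
Euler's identity `Σ p_j z_j ∂_j f(z) = d f(z)`, which vanishes on `f⁻¹(0)`. If all the expressions
`conj(z_j) ∂_k f(z) − conj(z_k) ∂_j f(z)` vanished, the gradient would be `c • conj z`, and Euler's
identity would read `c Σ p_j |z_j|² = 0`; as the weights are positive this forces `c = 0`,
so `z ≠ 0` would be a critical point.
-/

open Complex ComplexConjugate

theorem hasDerivAt_weighted_dilation {ι : Type*} [Fintype ι] (p : ι → ℕ) (z : ι → ℂ) :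
    HasDerivAt (fun r : ℝ => fun j => ((r ^ p j : ℝ) : ℂ) * z j) (fun j => (p j : ℂ) * z j) 1 :=
  hasDerivAt_pi.2 fun j => by
    simpa using ((hasDerivAt_pow (p j) (1 : ℝ)).ofReal_comp).mul_const (z j)

theorem fderiv_weighted_euler_s12 {ι : Type*} [Fintype ι] {f : (ι → ℂ) → ℂ} {z : ι → ℂ}
    (hf : DifferentiableAt ℂ f z) (p : ι → ℕ) (d : ℕ)
    (hhom : ∀ r : ℝ, 0 < r →
      f (fun j => ((r ^ p j : ℝ) : ℂ) * z j) = ((r ^ d : ℝ) : ℂ) * f z) :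
    fderiv ℂ f z (fun j => (p j : ℂ) * z j) = d * f z := by
  have hone : (fun j => ((1 ^ p j : ℝ) : ℂ) * z j) = z := by simp
  have hlhs : HasDerivAt (fun r : ℝ => f (fun j => ((r ^ p j : ℝ) : ℂ) * z j))
      (fderiv ℂ f z (fun j => (p j : ℂ) * z j)) 1 := by
    have hfz : HasFDerivAt f ((fderiv ℂ f z).restrictScalars ℝ)
        (fun j => ((1 ^ p j : ℝ) : ℂ) * z j) := by
      rw [hone]; exact hf.hasFDerivAt.restrictScalars ℝ
    exact hfz.comp_hasDerivAt 1 (hasDerivAt_weighted_dilation p z)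
  have hrhs : HasDerivAt (fun r : ℝ => ((r ^ d : ℝ) : ℂ) * f z) (d * f z) 1 := by
    simpa using ((hasDerivAt_pow d (1 : ℝ)).ofReal_comp).mul_const (f z)
  refine hlhs.unique (hrhs.congr_of_eventuallyEq ?_)
  filter_upwards [Ioi_mem_nhds one_pos] with r hr using hhom r hr

theorem ContinuousLinearMap.apply_eq_sum_smul_single {ι R M : Type*} [Fintype ι] [DecidableEq ι]
    [Semiring R] [TopologicalSpace R] [AddCommMonoid M] [TopologicalSpace M] [Module R M]
    (L : (ι → R) →L[R] M) (v : ι → R) : L v = ∑ j, v j • L (Pi.single j 1) := by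
  conv_lhs => rw [← Finset.univ_sum_single v, map_sum]
  refine Finset.sum_congr rfl fun j _ => ?_
  rw [← map_smul, ← Pi.single_smul', smul_eq_mul, mul_one]

theorem exists_eq_mul_conj_of_conj_mul_comm {ι : Type*} {z a : ι → ℂ} (hz : z ≠ 0)
    (h : ∀ j k, conj (z j) * a k = conj (z k) * a j) : ∃ c : ℂ, ∀ j, a j = c * conj (z j) := by
  obtain ⟨m, hm⟩ := Function.ne_iff.1 hz
  have hcm : conj (z m) ≠ 0 := by simpa using hm
  exact ⟨a m / conj (z m), fun j => by
    rw [div_mul_eq_mul_div, eq_div_iff hcm]; linear_combination h m j⟩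

theorem exists_lt_conj_mul_ne_of_weighted_sum_eq_zero {ι : Type*} [Fintype ι] [LinearOrder ι]
    {w : ι → ℝ} (hw : ∀ j, 0 < w j) {z a : ι → ℂ} (hz : z ≠ 0) (ha : a ≠ 0)
    (hsum : ∑ j, (w j : ℂ) * z j * a j = 0) :
    ∃ j k, j < k ∧ conj (z j) * a k ≠ conj (z k) * a j := by
  by_contra! hcon
  have hall : ∀ j k, conj (z j) * a k = conj (z k) * a j := fun j k => by
    rcases lt_trichotomy j k with h | rfl | h
    · exact hcon j k h
    · rfl
    · exact (hcon k j h).symm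
  obtain ⟨c, hc⟩ := exists_eq_mul_conj_of_conj_mul_comm hz hall
  have hpos : 0 < ∑ j, w j * normSq (z j) := by
    obtain ⟨m, hm⟩ := Function.ne_iff.1 hz
    exact Finset.sum_pos' (fun j _ => mul_nonneg (hw j).le (normSq_nonneg _))
      ⟨m, Finset.mem_univ m, mul_pos (hw m) (normSq_pos.2 hm)⟩
  have hsum' : ∑ j, (w j : ℂ) * z j * a j = c * ((∑ j, w j * normSq (z j) : ℝ) : ℂ) := by
    simp only [hc, ofReal_sum, ofReal_mul, Finset.mul_sum, ← mul_conj]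
    exact Finset.sum_congr rfl fun j _ => by ring
  have hc0 : c = 0 := by
    rw [hsum'] at hsum
    exact (mul_eq_zero.1 hsum).resolve_right (ofReal_ne_zero.2 hpos.ne')
  exact ha (funext fun j => by simp [hc, hc0])

theorem sum_sum_ite_lt_pos {ι : Type*} [Fintype ι] [LinearOrder ι] {g : ι → ι → ℝ}
    (hg : ∀ j k, 0 ≤ g j k) (h : ∃ j k, j < k ∧ 0 < g j k) :
    0 < ∑ j, ∑ k, if j < k then g j k else 0 := by
  obtain ⟨j, k, hjk, hpos⟩ := h
  have hnonneg : ∀ j k, 0 ≤ if j < k then g j k else 0 := fun j k => by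
    split_ifs
    exacts [hg j k, le_rfl]
  refine Finset.sum_pos' (fun i _ => Finset.sum_nonneg fun l _ => hnonneg i l)
    ⟨j, Finset.mem_univ j, Finset.sum_pos' (fun l _ => hnonneg j l) ⟨k, Finset.mem_univ k, ?_⟩⟩
  rwa [if_pos hjk]

theorem weighted_homogeneous_link_contact_general (n : ℕ)
    (f : (Fin n → ℂ) → ℂ) (hf : Differentiable ℂ f)
    (p : Fin n → ℕ) (hp : ∀ j, 0 < p j) (d : ℕ)
    (hhom : ∀ r : ℝ, 0 < r → ∀ z : Fin n → ℂ,
      f (fun j => ((r ^ (p j) : ℝ) : ℂ) * z j) = ((r ^ d : ℝ) : ℂ) * f z)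
    (hcrit : ∀ z : Fin n → ℂ, z ≠ 0 → ∃ j, fderiv ℂ f z (Pi.single j 1) ≠ 0) :
    ∀ z : Fin n → ℂ, z ≠ 0 → f z = 0 →
      (∃ j k : Fin n, j < k ∧
        conj (z j) * fderiv ℂ f z (Pi.single k 1) ≠
          conj (z k) * fderiv ℂ f z (Pi.single j 1)) ∧
      0 < ∑ j : Fin n, ∑ k : Fin n,
            if j < k then
              ‖conj (z j) * fderiv ℂ f z (Pi.single k 1)
                - conj (z k) * fderiv ℂ f z (Pi.single j 1)‖ ^ 2
            else 0 := by
  intro z hz hfz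
  set a : Fin n → ℂ := fun j => fderiv ℂ f z (Pi.single j 1)
  have heuler : ∑ j, ((p j : ℝ) : ℂ) * z j * a j = 0 := by
    have h := fderiv_weighted_euler_s12 (hf z) p d (fun r hr => hhom r hr z)
    rw [ContinuousLinearMap.apply_eq_sum_smul_single, hfz, mul_zero] at h
    simpa [a] using h
  have ha : a ≠ 0 := fun ha0 => by
    obtain ⟨j, hj⟩ := hcrit z hz
    exact hj (congrFun ha0 j)
  have hminor := exists_lt_conj_mul_ne_of_weighted_sum_eq_zero (fun j => Nat.cast_pos.2 (hp j))
    hz ha heuler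
  refine ⟨hminor, sum_sum_ite_lt_pos (fun _ _ => by positivity) ?_⟩
  obtain ⟨j, k, hjk, hne⟩ := hminor
  exact ⟨j, k, hjk, pow_pos (norm_pos_iff.2 (sub_ne_zero.2 hne)) 2⟩

/-- For a holomorphic weighted homogeneous polynomial `f` with an isolated critical
point at the origin, at every `z ≠ 0` with `f(z) = 0` there are indices `j < k` with
`conj(z_j) f_{z_k}(z) ≠ conj(z_k) f_{z_j}(z)`, i.e.
`C(z) = Σ_{j<k} |conj(z_j) f_{z_k}(z) − conj(z_k) f_{z_j}(z)|² > 0`; hence the link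
`f⁻¹(0) ∩ S_r` is a positive contact submanifold of `S_r` for every `r > 0`. -/
theorem weighted_homogeneous_link_contact (n : ℕ)
    (f : (Fin n → ℂ) → ℂ) (hf : Differentiable ℂ f)
    (p : Fin n → ℕ) (hp : ∀ j, 0 < p j) (d : ℕ) (hd : 0 < d)
    (hhom : ∀ r : ℝ, 0 < r → ∀ z : Fin n → ℂ,
      f (fun j => ((r ^ (p j) : ℝ) : ℂ) * z j) = ((r ^ d : ℝ) : ℂ) * f z)
    (hcrit : ∀ z : Fin n → ℂ, z ≠ 0 → ∃ j, fderiv ℂ f z (Pi.single j 1) ≠ 0) :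
    ∀ z : Fin n → ℂ, z ≠ 0 → f z = 0 →
      (∃ j k : Fin n, j < k ∧
        conj (z j) * fderiv ℂ f z (Pi.single k 1) ≠
          conj (z k) * fderiv ℂ f z (Pi.single j 1)) ∧
      0 < ∑ j : Fin n, ∑ k : Fin n,
            if j < k then
              ‖conj (z j) * fderiv ℂ f z (Pi.single k 1)
                - conj (z k) * fderiv ℂ f z (Pi.single j 1)‖ ^ 2
            else 0 :=
  weighted_homogeneous_link_contact_general n f hf p hp d hhom hcrit
end
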